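/- arXiv:2506.17254 — 5 statements merged into one kernel-verified Lean document; each statement's English description precedes it below -/
import Mathlib

section
/- Let ι be a finite type with exactly M elements, let γ > 0 be a real number, and let a, n : ι → ℝ satisfy a i ≥ 0 and n i > 0 for every i. Then ∑_{i ∈ ι} f_rad(a i, n i) · n i ≤ √(γ · M · ∑_{i ∈ ι} a i · n i) + γ · M. -/
open Real Finset

/-- Confidence radius `f_rad(v, n) = √(γ·v/n) + γ/n`. -/
noncomputable def frad (γ v n : ℝ) : ℝ := Real.sqrt (γ * v / n) + γ / n

lemma Real.sqrt_div_mul_self (x : ℝ) {y : ℝ} (hy : 0 ≤ y) : √(x / y) * y = √(x * y) := by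
  rcases hy.eq_or_lt with rfl | hy
  · simp
  · rw [← sqrt_sq hy.le, ← sqrt_mul' _ (sq_nonneg y), sqrt_sq hy.le]
    field_simp

lemma Real.sum_sqrt_le_sqrt_card_mul_sum {ι : Type*} (s : Finset ι) {f : ι → ℝ}
    (hf : ∀ i, 0 ≤ f i) : ∑ i ∈ s, √(f i) ≤ √(#s * ∑ i ∈ s, f i) := by
  simpa [sqrt_mul, hf] using sum_mul_le_sqrt_mul_sqrt s (fun _ ↦ (1 : ℝ)) (fun i ↦ √(f i))

lemma frad_mul_self (γ v : ℝ) {n : ℝ} (hn : 0 < n) : frad γ v n * n = √(γ * v * n) + γ := by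
  rw [frad, add_mul, sqrt_div_mul_self _ hn.le, div_mul_cancel₀ _ hn.ne']

theorem stmt_0 {ι : Type*} [Fintype ι] (M : ℕ) (hM : Fintype.card ι = M)
    (γ : ℝ) (hγ : 0 < γ) (a n : ι → ℝ)
    (ha : ∀ i, 0 ≤ a i) (hn : ∀ i, 0 < n i) :
    ∑ i, frad γ (a i) (n i) * n i
      ≤ Real.sqrt (γ * M * ∑ i, a i * n i) + γ * M := by
  have hterm (i : ι) : 0 ≤ γ * a i * n i := by have := ha i; have := hn i; positivity
  simp_rw [frad_mul_self _ _ (hn _)]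
  rw [sum_add_distrib, sum_const, card_univ, hM, nsmul_eq_mul, mul_comm (M : ℝ) γ]
  gcongr
  calc ∑ i, √(γ * a i * n i) ≤ √(M * ∑ i, γ * a i * n i) := by
        simpa [hM] using sum_sqrt_le_sqrt_card_mul_sum univ hterm
    _ = √(γ * M * ∑ i, a i * n i) := by simp_rw [mul_assoc, ← mul_sum]; ring_nf
end

section
/- Let (Ω, P) be a probability space, n ≥ 1 a natural number, γ > 0, and let X₁, …, Xₙ : Ω → ℝ be independent, identically distributed random variables taking values in [0,1] almost surely, with common mean v. Let x̄ = (1/n) ∑_{i=1}^n X_i denote the empirical average. Then P( |x̄ − v| ≥ √(γ · v / n) + γ / n ) ≤ 2 · exp(−3γ/8). -/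
open MeasureTheory ProbabilityTheory Real

/-!
For `[0,1]`-valued `X` with mean `v`, convexity of `exp` gives `E[exp(tX)] ≤ exp(v(eᵗ - 1))`,
so by independence the sum `S` has a moment generating function dominated by that of a Poisson
variable of mean `m = nv`. The Chernoff bound at `t = ±a/(m + a/3)` then gives Bernstein's tail
`P(|S - m| ≥ a) ≤ 2 exp(-a² / (2(m + a/3)))`, and for `a = √(γm) + γ` (that is, `n` times the
confidence radius) the exponent is at least `γ/2 ≥ 3γ/8`, because `a² ≥ γm + γa`.
-/

-- Termwise comparison with a geometric series, since `(n + 2)! ≥ 2 * 3 ^ n`.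
lemma exp_sub_one_sub_le_of_lt_three {s : ℝ} (hs0 : 0 ≤ s) (hs3 : s < 3) :
    exp s - 1 - s ≤ s ^ 2 / 2 * (1 - s / 3)⁻¹ := by
  have hexp : HasSum (fun n : ℕ => s ^ n / n.factorial) (exp s) := by
    simpa [exp_eq_exp_ℝ] using NormedSpace.expSeries_div_hasSum_exp s
  have htail : HasSum (fun n : ℕ => s ^ (n + 2) / (n + 2).factorial) (exp s - 1 - s) := by
    simpa [Finset.sum_range_succ, sub_sub] using (hasSum_nat_add_iff' 2).mpr hexp
  refine hasSum_le (fun n => ?_) htail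
    ((hasSum_geometric_of_lt_one (by positivity) (by linarith)).mul_left (s ^ 2 / 2))
  have hfact : (2 * 3 ^ n : ℝ) ≤ (n + 2).factorial := by
    have := @Nat.factorial_mul_pow_le_factorial 2 n
    rw [add_comm 2 n] at this
    exact_mod_cast this
  calc s ^ (n + 2) / (n + 2).factorial ≤ s ^ (n + 2) / (2 * 3 ^ n) := by gcongr
    _ = s ^ 2 / 2 * (s / 3) ^ n := by rw [div_pow, pow_add]; ring

lemma exp_sub_one_sub_mul_one_sub_div_three_le {s : ℝ} (hs0 : 0 ≤ s) (hs3 : s ≤ 3) :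
    (exp s - 1 - s) * (1 - s / 3) ≤ s ^ 2 / 2 := by
  rcases hs3.lt_or_eq with hs3 | rfl
  · have h := exp_sub_one_sub_le_of_lt_three hs0 hs3
    rwa [← le_div_iff₀ (by linarith), div_eq_mul_inv]
  · norm_num

-- `(1 + s + s²/2 + s³/6) * (1 - s + s²/2) ≥ 1` has only nonnegative coefficients beyond `1`.
lemma exp_neg_le_one_sub_add_sq_div_two {s : ℝ} (hs : 0 ≤ s) :
    exp (-s) ≤ 1 - s + s ^ 2 / 2 := by
  have h := sum_le_exp_of_nonneg hs 4
  simp only [Finset.sum_range_succ, Finset.sum_range_zero, Nat.factorial] at h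
  rw [exp_neg, inv_le_comm₀ (exp_pos s) (by nlinarith), ← one_div, div_le_iff₀ (by nlinarith)]
  push_cast at h
  nlinarith [pow_nonneg hs 3, pow_nonneg hs 4, pow_nonneg hs 5]

lemma exp_mul_le_one_add_exp_sub_one_mul {t x : ℝ} (hx0 : 0 ≤ x) (hx1 : x ≤ 1) :
    exp (t * x) ≤ 1 + (exp t - 1) * x := by
  have h := convexOn_exp.2 (Set.mem_univ 0) (Set.mem_univ t) (sub_nonneg.2 hx1) hx0 (by ring)
  simp only [smul_eq_mul, mul_zero, zero_add, exp_zero, mul_one] at h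
  rw [mul_comm t]
  linarith

-- The Chernoff exponent of a Poisson variable of mean `m`, evaluated at `t = a / (m + a / 3)`.
lemma poisson_upper_exponent_le {m a : ℝ} (hm : 0 ≤ m) (ha : 0 < a) :
    m * (exp (a / (m + a / 3)) - 1) - a / (m + a / 3) * (m + a) ≤
      -(a ^ 2 / (2 * (m + a / 3))) := by
  set b := m + a / 3 with hb_def
  have hb : 0 < b := by positivity
  set s := a / b
  have hsb : s * b = a := div_mul_cancel₀ a hb.ne'
  have hs0 : 0 ≤ s := by positivity
  have hs3 : s ≤ 3 := by rw [div_le_iff₀ hb, hb_def]; linarith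
  have hm_eq : m = b * (1 - s / 3) := by linear_combination hsb / 3
  have hsq : a ^ 2 / (2 * b) = s * a / 2 := by simp only [s]; field_simp
  have htaylor := exp_sub_one_sub_mul_one_sub_div_three_le hs0 hs3
  calc m * (exp s - 1) - s * (m + a) = b * ((exp s - 1 - s) * (1 - s / 3)) - s * a := by
        rw [hm_eq]; ring
    _ ≤ b * (s ^ 2 / 2) - s * a := by gcongr
    _ = -(a ^ 2 / (2 * b)) := by rw [hsq]; linear_combination s * hsb / 2

lemma poisson_lower_exponent_le {m a : ℝ} (hm : 0 ≤ m) (ha : 0 < a) :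
    m * (exp (-(a / (m + a / 3))) - 1) + a / (m + a / 3) * (m - a) ≤
      -(a ^ 2 / (2 * (m + a / 3))) := by
  set b := m + a / 3 with hb_def
  have hb : 0 < b := by positivity
  set s := a / b
  have hsb : s * b = a := div_mul_cancel₀ a hb.ne'
  have hs0 : 0 ≤ s := by positivity
  have hsm : s * m ≤ a := by rw [← hsb]; gcongr; rw [hb_def]; linarith
  have hsq : a ^ 2 / (2 * b) = s * a / 2 := by simp only [s]; field_simp
  have htaylor := exp_neg_le_one_sub_add_sq_div_two hs0
  calc m * (exp (-s) - 1) + s * (m - a) ≤ m * (1 - s + s ^ 2 / 2 - 1) + s * (m - a) := by gcongr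
    _ = s * (s * m) / 2 - s * a := by ring
    _ ≤ s * a / 2 - s * a := by gcongr
    _ = -(a ^ 2 / (2 * b)) := by rw [hsq]; ring

namespace ProbabilityTheory

variable {Ω : Type*} [MeasurableSpace Ω] {μ : Measure Ω}

section Bounded

variable [IsProbabilityMeasure μ]

lemma mgf_le_exp_integral_mul_exp_sub_one {X : Ω → ℝ} (hX : AEMeasurable X μ)
    (h01 : ∀ᵐ ω ∂μ, X ω ∈ Set.Icc 0 1) (t : ℝ) :
    mgf X μ t ≤ exp (μ[X] * (exp t - 1)) := by
  have hXint : Integrable X μ := .of_mem_Icc 0 1 hX h01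
  calc mgf X μ t ≤ ∫ ω, (1 + (exp t - 1) * X ω) ∂μ := by
        refine integral_mono_ae (integrable_exp_mul_of_mem_Icc hX h01)
          ((integrable_const 1).add (hXint.const_mul _)) ?_
        filter_upwards [h01] with ω hω using exp_mul_le_one_add_exp_sub_one_mul hω.1 hω.2
    _ = 1 + μ[X] * (exp t - 1) := by
        rw [integral_add (integrable_const 1) (hXint.const_mul _), integral_const,
          integral_const_mul]
        simp [mul_comm]
    _ ≤ exp (μ[X] * (exp t - 1)) := by linarith [add_one_le_exp (μ[X] * (exp t - 1))]

lemma iIndepFun.mgf_sum_le_of_mem_Icc {ι : Type*} {X : ι → Ω → ℝ} (hindep : iIndepFun X μ)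
    (hX : ∀ i, AEMeasurable (X i) μ) (h01 : ∀ i, ∀ᵐ ω ∂μ, X i ω ∈ Set.Icc 0 1)
    (s : Finset ι) (t : ℝ) :
    mgf (∑ i ∈ s, X i) μ t ≤ exp ((∑ i ∈ s, μ[X i]) * (exp t - 1)) := by
  rw [hindep.mgf_sum₀ hX, Finset.sum_mul, exp_sum]
  exact Finset.prod_le_prod (fun i _ => mgf_nonneg)
    (fun i _ => mgf_le_exp_integral_mul_exp_sub_one (hX i) (h01 i) t)

end Bounded

section PoissonDominated

variable [IsFiniteMeasure μ] {Y : Ω → ℝ} {m a : ℝ}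

lemma measureReal_add_le_le_of_mgf_le (hm : 0 ≤ m) (ha : 0 < a)
    (hint : ∀ t, Integrable (fun ω => exp (t * Y ω)) μ)
    (hmgf : ∀ t, mgf Y μ t ≤ exp (m * (exp t - 1))) :
    μ.real {ω | m + a ≤ Y ω} ≤ exp (-(a ^ 2 / (2 * (m + a / 3)))) := by
  set s := a / (m + a / 3)
  have hs : 0 ≤ s := by positivity
  calc μ.real {ω | m + a ≤ Y ω} ≤ exp (-s * (m + a)) * mgf Y μ s :=
        measure_ge_le_exp_mul_mgf _ hs (hint s)
    _ ≤ exp (-s * (m + a)) * exp (m * (exp s - 1)) := by gcongr; exact hmgf s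
    _ = exp (m * (exp s - 1) - s * (m + a)) := by rw [← exp_add]; ring_nf
    _ ≤ exp (-(a ^ 2 / (2 * (m + a / 3)))) := exp_le_exp.2 (poisson_upper_exponent_le hm ha)

lemma measureReal_le_sub_le_of_mgf_le (hm : 0 ≤ m) (ha : 0 < a)
    (hint : ∀ t, Integrable (fun ω => exp (t * Y ω)) μ)
    (hmgf : ∀ t, mgf Y μ t ≤ exp (m * (exp t - 1))) :
    μ.real {ω | Y ω ≤ m - a} ≤ exp (-(a ^ 2 / (2 * (m + a / 3)))) := by
  set s := a / (m + a / 3)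
  have hs : -s ≤ 0 := neg_nonpos.2 (by positivity)
  calc μ.real {ω | Y ω ≤ m - a} ≤ exp (-(-s) * (m - a)) * mgf Y μ (-s) :=
        measure_le_le_exp_mul_mgf _ hs (hint (-s))
    _ ≤ exp (-(-s) * (m - a)) * exp (m * (exp (-s) - 1)) := by gcongr; exact hmgf (-s)
    _ = exp (m * (exp (-s) - 1) + s * (m - a)) := by rw [← exp_add]; ring_nf
    _ ≤ exp (-(a ^ 2 / (2 * (m + a / 3)))) := exp_le_exp.2 (poisson_lower_exponent_le hm ha)

lemma measure_le_abs_sub_le_of_mgf_le (hm : 0 ≤ m) (ha : 0 < a)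
    (hint : ∀ t, Integrable (fun ω => exp (t * Y ω)) μ)
    (hmgf : ∀ t, mgf Y μ t ≤ exp (m * (exp t - 1))) :
    μ {ω | a ≤ |Y ω - m|} ≤ ENNReal.ofReal (2 * exp (-(a ^ 2 / (2 * (m + a / 3))))) := by
  have hsplit : {ω | a ≤ |Y ω - m|} = {ω | m + a ≤ Y ω} ∪ {ω | Y ω ≤ m - a} := by
    ext ω
    simp only [Set.mem_ofPred_eq, Set.mem_union, le_abs']
    constructor <;> rintro (h | h) <;> [right; left; right; left] <;> linarith
  rw [hsplit, two_mul, ENNReal.ofReal_add (exp_pos _).le (exp_pos _).le]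
  refine (measure_union_le _ _).trans (add_le_add ?_ ?_)
  · rw [← ofReal_measureReal]
    exact ENNReal.ofReal_le_ofReal (measureReal_add_le_le_of_mgf_le hm ha hint hmgf)
  · rw [← ofReal_measureReal]
    exact ENNReal.ofReal_le_ofReal (measureReal_le_sub_le_of_mgf_le hm ha hint hmgf)

end PoissonDominated

end ProbabilityTheory

lemma three_mul_div_eight_le_bernstein_exponent {γ m : ℝ} (hγ : 0 < γ) (hm : 0 ≤ m) :
    3 * γ / 8 ≤ (√(γ * m) + γ) ^ 2 / (2 * (m + (√(γ * m) + γ) / 3)) := by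
  have hr : √(γ * m) ^ 2 = γ * m := sq_sqrt (by positivity)
  rw [le_div_iff₀ (by positivity)]
  nlinarith [sqrt_nonneg (γ * m)]

lemma mul_sqrt_div_add_div {N γ v : ℝ} (hN : 0 < N) :
    N * (√(γ * v / N) + γ / N) = √(γ * (N * v)) + γ := by
  rw [mul_add, mul_div_cancel₀ γ hN.ne', ← sqrt_sq hN.le, ← sqrt_mul (sq_nonneg N),
    sqrt_sq hN.le]
  congr 2
  field_simp

theorem stmt_1_general {Ω : Type*} [MeasurableSpace Ω] (P : Measure Ω) [IsProbabilityMeasure P]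
    (n : ℕ) (hn : 1 ≤ n) (γ : ℝ) (hγ : 0 < γ) (v : ℝ)
    (X : Fin n → Ω → ℝ)
    (hmeas : ∀ i, Measurable (X i))
    (hindep : iIndepFun X P)
    (hrange : ∀ i, ∀ᵐ ω ∂P, X i ω ∈ Set.Icc (0 : ℝ) 1)
    (hmean : ∀ i, ∫ ω, X i ω ∂P = v) :
    P {ω | Real.sqrt (γ * v / n) + γ / n ≤ |(1 / (n : ℝ)) * ∑ i, X i ω - v|}
      ≤ ENNReal.ofReal (2 * Real.exp (-(3 * γ) / 8)) := by
  have hN : (0 : ℝ) < n := by exact_mod_cast hn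
  have hv : 0 ≤ v :=
    hmean ⟨0, hn⟩ ▸ integral_nonneg_of_ae ((hrange ⟨0, hn⟩).mono fun _ h => h.1)
  set a := √(γ * (n * v)) + γ
  have hmgf (t : ℝ) : mgf (∑ i, X i) P t ≤ exp (n * v * (exp t - 1)) := by
    simpa [hmean] using
      hindep.mgf_sum_le_of_mem_Icc (fun i => (hmeas i).aemeasurable) hrange Finset.univ t
  have hint (t : ℝ) : Integrable (fun ω => exp (t * (∑ i, X i) ω)) P :=
    hindep.integrable_exp_mul_sum hmeas fun i _ =>
      integrable_exp_mul_of_mem_Icc (hmeas i).aemeasurable (hrange i)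
  have hsub : {ω | √(γ * v / n) + γ / n ≤ |(1 / (n : ℝ)) * ∑ i, X i ω - v|} ⊆
      {ω | a ≤ |(∑ i, X i) ω - n * v|} := by
    intro ω hω
    calc a = n * (√(γ * v / n) + γ / n) := (mul_sqrt_div_add_div hN).symm
      _ ≤ n * |(1 / (n : ℝ)) * ∑ i, X i ω - v| := by gcongr; exact hω
      _ = |(∑ i, X i) ω - n * v| := by
        rw [← abs_of_pos hN, ← abs_mul, abs_of_pos hN, Finset.sum_apply]
        congr 1
        field_simp
  calc _ ≤ P {ω | a ≤ |(∑ i, X i) ω - n * v|} := measure_mono hsub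
    _ ≤ ENNReal.ofReal (2 * exp (-(a ^ 2 / (2 * (n * v + a / 3))))) :=
        measure_le_abs_sub_le_of_mgf_le (by positivity) (by positivity) hint hmgf
    _ ≤ ENNReal.ofReal (2 * exp (-(3 * γ) / 8)) := by
        gcongr
        rw [neg_div, neg_le_neg_iff]
        exact three_mul_div_eight_le_bernstein_exponent hγ (by positivity)

theorem stmt_1 {Ω : Type*} [MeasurableSpace Ω] (P : Measure Ω) [IsProbabilityMeasure P]
    (n : ℕ) (hn : 1 ≤ n) (γ : ℝ) (hγ : 0 < γ) (v : ℝ)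
    (X : Fin n → Ω → ℝ)
    (hmeas : ∀ i, Measurable (X i))
    (hindep : iIndepFun X P)
    (hident : ∀ i j, IdentDistrib (X i) (X j) P P)
    (hrange : ∀ i, ∀ᵐ ω ∂P, X i ω ∈ Set.Icc (0 : ℝ) 1)
    (hmean : ∀ i, ∫ ω, X i ω ∂P = v) :
    P {ω | Real.sqrt (γ * v / n) + γ / n ≤ |(1 / (n : ℝ)) * ∑ i, X i ω - v|}
      ≤ ENNReal.ofReal (2 * Real.exp (-(3 * γ) / 8)) :=
  stmt_1_general P n hn γ hγ v X hmeas hindep hrange hmean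
end

section
/- Let γ > 0, n > 0 be real numbers and let v ≥ 0, x̄ ≥ 0 be real numbers. If |v − x̄| ≤ f_rad(v, n), then f_rad(x̄, n) ≤ 3 · f_rad(v, n). -/
/-! With `t = γ / n` and `s = √(t v)`, the hypothesis gives `t x̄ ≤ s² + t s + t² ≤ (s + t)²`,
so `f_rad(x̄, n) ≤ s + 2t ≤ 3 f_rad(v, n)`. -/

theorem frad_eq (γ v n : ℝ) : frad γ v n = √(γ / n * v) + γ / n := by
  rw [frad, mul_div_right_comm]

theorem Real.sqrt_mul_le_sqrt_mul_add {t v x : ℝ} (ht : 0 ≤ t) (hx : x ≤ v + √(t * v) + t) :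
    √(t * x) ≤ √(t * v) + t := by
  set s := √(t * v)
  have hs : 0 ≤ s := Real.sqrt_nonneg _
  have hsq : t * v ≤ s ^ 2 := by rw [Real.sq_sqrt']; exact le_max_left _ _
  have key : t * x ≤ (s + t) ^ 2 :=
    calc t * x ≤ t * (v + s + t) := mul_le_mul_of_nonneg_left hx ht
      _ ≤ (s + t) ^ 2 := by nlinarith [mul_nonneg ht hs]
  exact Real.sqrt_le_iff.mpr ⟨by positivity, key⟩

theorem frad_le_frad_add {γ n v x : ℝ} (hγ : 0 < γ) (hn : 0 < n) (hx : x ≤ v + frad γ v n) :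
    frad γ x n ≤ frad γ v n + γ / n := by
  simp only [frad_eq] at hx ⊢
  have := Real.sqrt_mul_le_sqrt_mul_add (by positivity) (by linarith : x ≤ v + √(γ / n * v) + γ / n)
  linarith

theorem stmt_2_general (γ n v xbar : ℝ) (hγ : 0 < γ) (hn : 0 < n)
    (h : |v - xbar| ≤ frad γ v n) :
    frad γ xbar n ≤ 3 * frad γ v n := by
  have hxbar : xbar ≤ v + frad γ v n := by linarith [(abs_le.mp h).1]
  have hsqrt : 0 ≤ √(γ / n * v) := Real.sqrt_nonneg _
  have hc : 0 ≤ γ / n := by positivity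
  have := frad_le_frad_add hγ hn hxbar
  simp only [frad_eq] at this ⊢
  linarith

theorem stmt_2 (γ n v xbar : ℝ) (hγ : 0 < γ) (hn : 0 < n)
    (hv : 0 ≤ v) (hx : 0 ≤ xbar)
    (h : |v - xbar| ≤ frad γ v n) :
    frad γ xbar n ≤ 3 * frad γ v n :=
  stmt_2_general γ n v xbar hγ hn h
end

section
/- Let γ ≥ 1 and n > 0 be real numbers, let μ ∈ [0,1], let x̄ ≥ 0, and set μ̂ = n · x̄ / (n+1). If |x̄ − μ| ≤ f_rad(x̄, n), then |μ̂ − μ| ≤ 2 · f_rad(μ̂, n+1). -/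
theorem frad_eq_div_mul_frad (γ v : ℝ) {a b : ℝ} (ha : 0 < a) (hb : 0 < b) :
    frad γ v a = b / a * frad γ (a * v / b) b := by
  have hscale : γ * v / a = (b / a) ^ 2 * (γ * (a * v / b) / b) := by
    field_simp
  unfold frad
  rw [hscale, Real.sqrt_mul (sq_nonneg _), Real.sqrt_sq (by positivity), mul_add]
  congr 1
  field_simp

theorem div_le_frad (γ v n : ℝ) : γ / n ≤ frad γ v n :=
  le_add_of_nonneg_left (Real.sqrt_nonneg _)

theorem abs_mul_div_add_one_sub_le {n : ℝ} (hn : 0 < n) (x μ : ℝ) :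
    |n * x / (n + 1) - μ| ≤ (n * |x - μ| + |μ|) / (n + 1) := by
  have hn1 : 0 < n + 1 := by linarith
  have hdiff : n * x / (n + 1) - μ = (n * (x - μ) - μ) / (n + 1) := by
    field_simp
    ring
  rw [hdiff, abs_div, abs_of_pos hn1]
  gcongr
  calc |n * (x - μ) - μ| ≤ |n * (x - μ)| + |μ| := abs_sub _ _
    _ = n * |x - μ| + |μ| := by rw [abs_mul, abs_of_pos hn]

theorem stmt_4_general (γ n μ xbar : ℝ) (hγ : 1 ≤ γ) (hn : 0 < n)
    (hμ : μ ∈ Set.Icc (0 : ℝ) 1)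
    (h : |xbar - μ| ≤ frad γ xbar n) :
    |n * xbar / (n + 1) - μ| ≤ 2 * frad γ (n * xbar / (n + 1)) (n + 1) := by
  have hn1 : 0 < n + 1 := by linarith
  set R := frad γ (n * xbar / (n + 1)) (n + 1)
  have hx : n * |xbar - μ| ≤ (n + 1) * R := by
    rw [frad_eq_div_mul_frad γ xbar hn hn1] at h
    calc n * |xbar - μ| ≤ n * ((n + 1) / n * R) := by gcongr
      _ = (n + 1) * R := by field_simp
  have hμγ : |μ| ≤ γ := by
    rw [abs_of_nonneg hμ.1]
    linarith [hμ.2]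
  calc |n * xbar / (n + 1) - μ| ≤ (n * |xbar - μ| + |μ|) / (n + 1) :=
        abs_mul_div_add_one_sub_le hn xbar μ
    _ ≤ ((n + 1) * R + γ) / (n + 1) := by gcongr
    _ = R + γ / (n + 1) := by field_simp
    _ ≤ 2 * R := by linarith [div_le_frad γ (n * xbar / (n + 1)) (n + 1)]

theorem stmt_4 (γ n μ xbar : ℝ) (hγ : 1 ≤ γ) (hn : 0 < n)
    (hμ : μ ∈ Set.Icc (0 : ℝ) 1) (hx : 0 ≤ xbar)
    (h : |xbar - μ| ≤ frad γ xbar n) :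
    |n * xbar / (n + 1) - μ| ≤ 2 * frad γ (n * xbar / (n + 1)) (n + 1) :=
  stmt_4_general γ n μ xbar hγ hn hμ h
end

section
/- Let S be a finite type, α : S → ℝ, b ∈ ℝ, M ∈ ℕ, and let μ, u, ρ, c, l : S → ℝ satisfy μ m ≤ u m ≤ μ m + ρ m and l m ≤ c m for all m ∈ S. Let F(h, b) denote the feasible set with cost vector h and budget b. Suppose d_opt ∈ F(c, b) satisfies ∑_{m∈S} μ m · d_opt m ≥ ∑_{m∈S} μ m · p m for all p ∈ F(c, b) (so V* := ∑ μ m · d_opt m is the optimal value over F(c, b)), and suppose d* ∈ F(l, b) satisfies ∑_{m∈S} u m · d* m ≥ ∑_{m∈S} u m · p m for all p ∈ F(l, b). Then ∑_{m∈S} μ m · d* m ≥ V* − ∑_{m∈S} ρ m · d* m. -/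
/-! Optimism: since `l ≤ c`, the true optimum `dopt` is feasible for the optimistic problem,
so `V* ≤ ∑ u·dopt ≤ ∑ u·d* ≤ ∑ (μ + ρ)·d*`. -/

open Finset

variable {S : Type*} [Fintype S]

/-- Feasible set `F(h, b)` with cost vector `h` and budget `b`. -/
def Feas (α : S → ℝ) (M : ℕ) (h : S → ℝ) (b : ℝ) : Set (S → ℝ) :=
  {p | (∀ m, 0 ≤ p m ∧ p m ≤ α m) ∧ (∑ m, p m) = 1 ∧
    (∑ m, h m * p m) ≤ b ∧ {m | p m ≠ 0}.ncard ≤ M}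

lemma sum_mul_le_sum_mul_of_le {f g p : S → ℝ} (hfg : ∀ m, f m ≤ g m) (hp : ∀ m, 0 ≤ p m) :
    ∑ m, f m * p m ≤ ∑ m, g m * p m :=
  sum_le_sum fun m _ => mul_le_mul_of_nonneg_right (hfg m) (hp m)

lemma nonneg_of_mem_feas {α : S → ℝ} {M : ℕ} {h : S → ℝ} {b : ℝ} {p : S → ℝ}
    (hp : p ∈ Feas α M h b) (m : S) : 0 ≤ p m :=
  (hp.1 m).1

lemma Feas.subset_of_cost_le {α : S → ℝ} {M : ℕ} {l c : S → ℝ} {b : ℝ} (hlc : ∀ m, l m ≤ c m) :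
    Feas α M c b ⊆ Feas α M l b := fun _ hp =>
  ⟨hp.1, hp.2.1, (sum_mul_le_sum_mul_of_le hlc (nonneg_of_mem_feas hp)).trans hp.2.2.1,
    hp.2.2.2⟩

theorem stmt_8_general (α : S → ℝ) (b : ℝ) (M : ℕ) (μ u ρ c l : S → ℝ)
    (hu : ∀ m, μ m ≤ u m ∧ u m ≤ μ m + ρ m)
    (hl : ∀ m, l m ≤ c m)
    (dopt : S → ℝ) (hdopt : dopt ∈ Feas α M c b)
    (dstar : S → ℝ) (hdstar : dstar ∈ Feas α M l b)
    (hdstar_max : ∀ p ∈ Feas α M l b, ∑ m, u m * p m ≤ ∑ m, u m * dstar m) :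
    (∑ m, μ m * dopt m) - ∑ m, ρ m * dstar m ≤ ∑ m, μ m * dstar m := by
  calc (∑ m, μ m * dopt m) - ∑ m, ρ m * dstar m
      ≤ (∑ m, u m * dopt m) - ∑ m, ρ m * dstar m :=
        sub_le_sub_right
          (sum_mul_le_sum_mul_of_le (fun m => (hu m).1) (nonneg_of_mem_feas hdopt)) _
    _ ≤ (∑ m, u m * dstar m) - ∑ m, ρ m * dstar m :=
        sub_le_sub_right (hdstar_max dopt (Feas.subset_of_cost_le hl hdopt)) _
    _ ≤ (∑ m, (μ m + ρ m) * dstar m) - ∑ m, ρ m * dstar m :=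
        sub_le_sub_right
          (sum_mul_le_sum_mul_of_le (fun m => (hu m).2) (nonneg_of_mem_feas hdstar)) _
    _ = ∑ m, μ m * dstar m := by simp only [add_mul, sum_add_distrib, add_sub_cancel_right]

theorem stmt_8 (α : S → ℝ) (b : ℝ) (M : ℕ) (μ u ρ c l : S → ℝ)
    (hu : ∀ m, μ m ≤ u m ∧ u m ≤ μ m + ρ m)
    (hl : ∀ m, l m ≤ c m)
    (dopt : S → ℝ) (hdopt : dopt ∈ Feas α M c b)
    (hdopt_max : ∀ p ∈ Feas α M c b, ∑ m, μ m * p m ≤ ∑ m, μ m * dopt m)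
    (dstar : S → ℝ) (hdstar : dstar ∈ Feas α M l b)
    (hdstar_max : ∀ p ∈ Feas α M l b, ∑ m, u m * p m ≤ ∑ m, u m * dstar m) :
    (∑ m, μ m * dopt m) - ∑ m, ρ m * dstar m ≤ ∑ m, μ m * dstar m :=
  stmt_8_general α b M μ u ρ c l hu hl dopt hdopt dstar hdstar hdstar_max
end
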